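/- The function h(l) = 4 l² ∫_0^∞ z² Φ(−l z √I / 2) φ(z) dz, defined for l > 0 with constant I > 0, tends to 0 as l → 0⁺ and as l → ∞, is continuous and positive on (0, ∞), and hence attains a maximum at some l* ∈ (0, ∞). -/

import Mathlib

open Real MeasureTheory Filter

/-- The standard normal density `φ`. -/
noncomputable def stdNormalPDF (u : ℝ) : ℝ :=
  (Real.sqrt (2 * Real.pi))⁻¹ * Real.exp (-u ^ 2 / 2)

/-- The standard normal CDF `Φ`. -/
noncomputable def stdNormalCDF (t : ℝ) : ℝ :=
  ∫ u in Set.Iic t, stdNormalPDF u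

/-- The ATMCMC diffusion speed `h(l) = 4 l² ∫₀^∞ z² Φ(−lz√I/2) φ(z) dz`. -/
noncomputable def atmcmcSpeed (I : ℝ) (l : ℝ) : ℝ :=
  4 * l ^ 2 * ∫ z in Set.Ioi (0 : ℝ),
    z ^ 2 * stdNormalCDF (-(l * z * Real.sqrt I) / 2) * stdNormalPDF z

/-!
Since `Φ ≤ 1`, the integrand is dominated by `z² φ(z)` uniformly in `l`, so `h` is continuous on
all of `ℝ` and `h(0) = 0`. For large `l`, the Chernoff bound `Φ(-a) ≤ exp(-a²/2)` gives
`Φ(-κz) φ(z) ≤ φ(κz)` with `κ = l √I / 2`, and the substitution `w = κz` bounds `h(l)` by a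
multiple of `1 / l`. A continuous function on `(0, ∞)` that exceeds its common limit at both ends
somewhere attains its maximum on a compact subinterval.
-/

open Set ProbabilityTheory

theorem stdNormalPDF_eq_gaussianPDFReal : stdNormalPDF = gaussianPDFReal 0 1 := by
  ext u
  simp [stdNormalPDF, gaussianPDFReal]

theorem stdNormalPDF_pos (u : ℝ) : 0 < stdNormalPDF u := by
  unfold stdNormalPDF
  positivity

theorem stdNormalPDF_le (u : ℝ) : stdNormalPDF u ≤ (√(2 * π))⁻¹ := by
  unfold stdNormalPDF
  refine mul_le_of_le_one_right (by positivity) (exp_le_one_iff.2 ?_)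
  nlinarith [sq_nonneg u]

@[fun_prop]
theorem continuous_stdNormalPDF : Continuous stdNormalPDF := by
  unfold stdNormalPDF
  fun_prop

theorem integrable_stdNormalPDF : Integrable stdNormalPDF := by
  rw [stdNormalPDF_eq_gaussianPDFReal]
  exact integrable_gaussianPDFReal 0 1

theorem integral_stdNormalPDF : ∫ u, stdNormalPDF u = 1 := by
  rw [stdNormalPDF_eq_gaussianPDFReal]
  exact integral_gaussianPDFReal_eq_one 0 one_ne_zero

theorem integrableOn_sq_mul_stdNormalPDF_mul {κ : ℝ} (hκ : κ ≠ 0) :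
    IntegrableOn (fun z => z ^ 2 * stdNormalPDF (κ * z)) (Ioi 0) := by
  have h := (integrableOn_rpow_mul_exp_neg_mul_sq (b := κ ^ 2 / 2) (by positivity) (s := 2)
    (by norm_num)).const_mul (√(2 * π))⁻¹
  refine IntegrableOn.congr_fun h (fun z _ => ?_) measurableSet_Ioi
  simp only [stdNormalPDF, rpow_two]
  ring_nf

theorem integrableOn_sq_mul_stdNormalPDF :
    IntegrableOn (fun z => z ^ 2 * stdNormalPDF z) (Ioi 0) := by
  simpa using integrableOn_sq_mul_stdNormalPDF_mul one_ne_zero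

theorem integral_Ioi_sq_mul_stdNormalPDF_mul {κ : ℝ} (hκ : 0 < κ) :
    ∫ z in Ioi 0, z ^ 2 * stdNormalPDF (κ * z) =
      (κ ^ 3)⁻¹ * ∫ z in Ioi 0, z ^ 2 * stdNormalPDF z := by
  have hrescale : ∀ z, z ^ 2 * stdNormalPDF (κ * z) =
      (κ ^ 2)⁻¹ * ((κ * z) ^ 2 * stdNormalPDF (κ * z)) := fun z => by
    field_simp
  simp_rw [hrescale, integral_const_mul,
    integral_comp_mul_left_Ioi (fun w => w ^ 2 * stdNormalPDF w) 0 hκ, mul_zero, smul_eq_mul]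
  ring

theorem stdNormalCDF_nonneg (t : ℝ) : 0 ≤ stdNormalCDF t :=
  setIntegral_nonneg measurableSet_Iic fun u _ => (stdNormalPDF_pos u).le

theorem stdNormalCDF_le_one (t : ℝ) : stdNormalCDF t ≤ 1 :=
  integral_stdNormalPDF ▸ setIntegral_le_integral integrable_stdNormalPDF
    (ae_of_all _ fun u => (stdNormalPDF_pos u).le)

theorem stdNormalCDF_pos (t : ℝ) : 0 < stdNormalCDF t := by
  refine (setIntegral_pos_iff_support_of_nonneg_ae (ae_of_all _ fun u => (stdNormalPDF_pos u).le)
    integrable_stdNormalPDF.integrableOn).2 ?_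
  rw [Function.support_eq_univ fun u => (stdNormalPDF_pos u).ne', univ_inter]
  simp

@[fun_prop]
theorem continuous_stdNormalCDF : Continuous stdNormalCDF :=
  continuous_iff_continuousAt.2 fun t =>
    (integrable_stdNormalPDF.integrableOn.continuousOn_Iic_primitive_Iic (a₀ := t + 1)).continuousAt
      (Iic_mem_nhds (lt_add_one t))

/-- Chernoff bound: on `Iic (-a)`, `φ` is dominated by `exp(-a²/2)` times its translate by `a`. -/
theorem stdNormalCDF_neg_le_exp {a : ℝ} (ha : 0 ≤ a) : stdNormalCDF (-a) ≤ exp (-a ^ 2 / 2) := by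
  have hshift : Integrable fun u => exp (-a ^ 2 / 2) * stdNormalPDF (u + a) :=
    (integrable_stdNormalPDF.comp_add_right a).const_mul _
  have hpt : ∀ u ∈ Iic (-a), stdNormalPDF u ≤ exp (-a ^ 2 / 2) * stdNormalPDF (u + a) := by
    intro u hu
    simp only [stdNormalPDF, mul_left_comm (exp _), ← exp_add]
    gcongr
    nlinarith [mul_nonneg ha (by linarith [mem_Iic.1 hu] : 0 ≤ -(u + a))]
  calc stdNormalCDF (-a)
      ≤ ∫ u in Iic (-a), exp (-a ^ 2 / 2) * stdNormalPDF (u + a) :=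
        setIntegral_mono_on integrable_stdNormalPDF.integrableOn hshift.integrableOn
          measurableSet_Iic hpt
    _ ≤ ∫ u, exp (-a ^ 2 / 2) * stdNormalPDF (u + a) :=
        setIntegral_le_integral hshift (ae_of_all _ fun u => by
          have := stdNormalPDF_pos (u + a); positivity)
    _ = exp (-a ^ 2 / 2) := by
        rw [integral_const_mul, integral_add_right_eq_self stdNormalPDF a, integral_stdNormalPDF,
          mul_one]

theorem stdNormalCDF_neg_mul_stdNormalPDF_le {a : ℝ} (ha : 0 ≤ a) (z : ℝ) :
    stdNormalCDF (-a) * stdNormalPDF z ≤ stdNormalPDF a :=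
  calc stdNormalCDF (-a) * stdNormalPDF z ≤ exp (-a ^ 2 / 2) * (√(2 * π))⁻¹ :=
        mul_le_mul (stdNormalCDF_neg_le_exp ha) (stdNormalPDF_le z) (stdNormalPDF_pos z).le
          (exp_pos _).le
    _ = stdNormalPDF a := mul_comm _ _

noncomputable def speedIntegrand (I l z : ℝ) : ℝ :=
  z ^ 2 * stdNormalCDF (-(l * z * √I) / 2) * stdNormalPDF z

theorem atmcmcSpeed_eq (I l : ℝ) :
    atmcmcSpeed I l = 4 * l ^ 2 * ∫ z in Ioi 0, speedIntegrand I l z := rfl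

section speedIntegrand

variable (I l z : ℝ)

theorem speedIntegrand_nonneg : 0 ≤ speedIntegrand I l z := by
  have := stdNormalCDF_nonneg (-(l * z * √I) / 2)
  have := stdNormalPDF_pos z
  unfold speedIntegrand
  positivity

theorem speedIntegrand_le : speedIntegrand I l z ≤ z ^ 2 * stdNormalPDF z :=
  mul_le_mul_of_nonneg_right (mul_le_of_le_one_right (sq_nonneg z) (stdNormalCDF_le_one _))
    (stdNormalPDF_pos z).le

theorem continuous_speedIntegrand_left : Continuous fun l => speedIntegrand I l z := by
  unfold speedIntegrand
  fun_prop

theorem continuous_speedIntegrand_right : Continuous (speedIntegrand I l) := by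
  unfold speedIntegrand
  fun_prop

theorem integrableOn_speedIntegrand : IntegrableOn (speedIntegrand I l) (Ioi 0) :=
  integrableOn_sq_mul_stdNormalPDF.mono' (continuous_speedIntegrand_right I l).aestronglyMeasurable
    (ae_of_all _ fun z =>
      (norm_of_nonneg (speedIntegrand_nonneg I l z)).trans_le (speedIntegrand_le I l z))

variable {I l z}

theorem speedIntegrand_pos (hz : 0 < z) : 0 < speedIntegrand I l z := by
  have := stdNormalCDF_pos (-(l * z * √I) / 2)
  have := stdNormalPDF_pos z
  unfold speedIntegrand
  positivity

theorem speedIntegrand_le_sq_mul_stdNormalPDF_mul (hl : 0 ≤ l) (hz : 0 ≤ z) :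
    speedIntegrand I l z ≤ z ^ 2 * stdNormalPDF (l * √I / 2 * z) := by
  have h := stdNormalCDF_neg_mul_stdNormalPDF_le (a := l * √I / 2 * z) (by positivity) z
  rw [show -(l * √I / 2 * z) = -(l * z * √I) / 2 by ring] at h
  rw [speedIntegrand, mul_assoc]
  exact mul_le_mul_of_nonneg_left h (sq_nonneg z)

end speedIntegrand

theorem continuous_atmcmcSpeed (I : ℝ) : Continuous (atmcmcSpeed I) := by
  refine continuous_const.mul (continuous_pow 2) |>.mul <|
    continuous_of_dominated (bound := fun z => z ^ 2 * stdNormalPDF z)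
      (fun l => (continuous_speedIntegrand_right I l).aestronglyMeasurable)
      (fun l => ae_of_all _ fun z => ?_) integrableOn_sq_mul_stdNormalPDF
      (ae_of_all _ fun z => continuous_speedIntegrand_left I z)
  exact (norm_of_nonneg (speedIntegrand_nonneg I l z)).trans_le (speedIntegrand_le I l z)

theorem atmcmcSpeed_pos (I : ℝ) {l : ℝ} (hl : 0 < l) : 0 < atmcmcSpeed I l := by
  have hsupp : Ioi 0 ⊆ Function.support (speedIntegrand I l) :=
    fun z hz => (speedIntegrand_pos hz).ne'
  have hint : 0 < ∫ z in Ioi 0, speedIntegrand I l z := by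
    refine (setIntegral_pos_iff_support_of_nonneg_ae
      (ae_of_all _ (speedIntegrand_nonneg I l)) (integrableOn_speedIntegrand I l)).2 ?_
    rw [inter_eq_right.2 hsupp]
    simp
  rw [atmcmcSpeed_eq]
  positivity

theorem tendsto_atmcmcSpeed_nhdsGT_zero (I : ℝ) :
    Tendsto (atmcmcSpeed I) (nhdsWithin 0 (Ioi 0)) (nhds 0) := by
  have h := (continuous_atmcmcSpeed I).tendsto 0
  rw [show atmcmcSpeed I 0 = 0 by simp [atmcmcSpeed]] at h
  exact h.mono_left nhdsWithin_le_nhds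

/-- The Chernoff bound makes the integrand at most `z² φ(l √I z / 2)`, whose integral scales
like `l⁻³`. -/
theorem atmcmcSpeed_le {I l : ℝ} (hI : 0 < I) (hl : 0 < l) :
    atmcmcSpeed I l ≤ 32 * (∫ z in Ioi 0, z ^ 2 * stdNormalPDF z) / (√I ^ 3 * l) := by
  have hκ : 0 < l * √I / 2 := by positivity
  have hint : ∫ z in Ioi 0, speedIntegrand I l z ≤
      ∫ z in Ioi 0, z ^ 2 * stdNormalPDF (l * √I / 2 * z) :=
    setIntegral_mono_on (integrableOn_speedIntegrand I l)
      (integrableOn_sq_mul_stdNormalPDF_mul hκ.ne') measurableSet_Ioi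
      fun z hz => speedIntegrand_le_sq_mul_stdNormalPDF_mul hl.le (le_of_lt hz)
  rw [integral_Ioi_sq_mul_stdNormalPDF_mul hκ] at hint
  calc atmcmcSpeed I l
      ≤ 4 * l ^ 2 * (((l * √I / 2) ^ 3)⁻¹ * ∫ z in Ioi 0, z ^ 2 * stdNormalPDF z) := by
        rw [atmcmcSpeed_eq]
        gcongr
    _ = 32 * (∫ z in Ioi 0, z ^ 2 * stdNormalPDF z) / (√I ^ 3 * l) := by
        field_simp
        ring

theorem tendsto_atmcmcSpeed_atTop {I : ℝ} (hI : 0 < I) :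
    Tendsto (atmcmcSpeed I) atTop (nhds 0) := by
  have hbound : Tendsto (fun l => 32 * (∫ z in Ioi 0, z ^ 2 * stdNormalPDF z) / (√I ^ 3 * l))
      atTop (nhds 0) :=
    tendsto_const_nhds.div_atTop (tendsto_id.const_mul_atTop (by positivity))
  exact squeeze_zero' ((eventually_gt_atTop 0).mono fun l hl => (atmcmcSpeed_pos I hl).le)
    ((eventually_gt_atTop 0).mono fun l hl => atmcmcSpeed_le hI hl) hbound

theorem exists_isMaxOn_Ioi_of_tendsto {f : ℝ → ℝ} {a c x₀ : ℝ} (hf : ContinuousOn f (Ioi a))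
    (hleft : Tendsto f (nhdsWithin a (Ioi a)) (nhds c)) (hright : Tendsto f atTop (nhds c))
    (hx₀ : a < x₀) (hc : c < f x₀) : ∃ x ∈ Ioi a, IsMaxOn f (Ioi a) x := by
  obtain ⟨ε, hε, hsmall⟩ := mem_nhdsGT_iff_exists_Ioo_subset.1 (hleft.eventually_lt_const hc)
  obtain ⟨B, hlarge⟩ := eventually_atTop.1 (hright.eventually_lt_const hc)
  have hK : Icc (min ε x₀) (max B x₀) ⊆ Ioi a := fun x hx => (lt_min hε hx₀).trans_le hx.1
  obtain ⟨x, hx, hmax⟩ := isCompact_Icc.exists_isMaxOn ⟨x₀, min_le_right _ _, le_max_right _ _⟩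
    (hf.mono hK)
  refine ⟨x, hK hx, fun y hy => ?_⟩
  by_cases hyK : y ∈ Icc (min ε x₀) (max B x₀)
  · exact hmax hyK
  have hx₀x : f x₀ ≤ f x := hmax ⟨min_le_right _ _, le_max_right _ _⟩
  rcases not_and_or.1 hyK with hy' | hy'
  · exact (hsmall ⟨hy, (lt_of_not_ge hy').trans_le (min_le_left _ _)⟩).le.trans hx₀x
  · exact (hlarge y ((le_max_left _ _).trans (lt_of_not_ge hy').le)).le.trans hx₀x

/-- `h` tends to `0` as `l → 0⁺` and as `l → ∞`, is continuous and positive on `(0, ∞)`,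
and attains a maximum at some `l* ∈ (0, ∞)`. -/
theorem atmcmc_diffusion_speed_properties (I : ℝ) (hI : 0 < I) :
    Tendsto (atmcmcSpeed I) (nhdsWithin 0 (Set.Ioi 0)) (nhds 0) ∧
    Tendsto (atmcmcSpeed I) atTop (nhds 0) ∧
    ContinuousOn (atmcmcSpeed I) (Set.Ioi 0) ∧
    (∀ l : ℝ, 0 < l → 0 < atmcmcSpeed I l) ∧
    (∃ lstar : ℝ, 0 < lstar ∧ ∀ l : ℝ, 0 < l → atmcmcSpeed I l ≤ atmcmcSpeed I lstar) := by
  obtain ⟨lstar, hlstar, hmax⟩ := exists_isMaxOn_Ioi_of_tendsto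
    (continuous_atmcmcSpeed I).continuousOn (tendsto_atmcmcSpeed_nhdsGT_zero I)
    (tendsto_atmcmcSpeed_atTop hI) one_pos (atmcmcSpeed_pos I one_pos)
  exact ⟨tendsto_atmcmcSpeed_nhdsGT_zero I, tendsto_atmcmcSpeed_atTop hI,
    (continuous_atmcmcSpeed I).continuousOn, fun l => atmcmcSpeed_pos I,
    lstar, hlstar, fun l hl => hmax hl⟩
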